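/- Let ν = N(0, C) be the centered multivariate Gaussian measure on ℝⁿ with symmetric positive definite covariance matrix C, and let A be a symmetric n×n real matrix. Then the variance of the Gaussian quadratic form is Var_ν[⟨x, A x⟩] = 2 tr((A C)²), i.e. ∫ (⟨x, A x⟩ − tr(A C))² dν(x) = 2 tr((A C)²). -/

import Mathlib

open MeasureTheory ProbabilityTheory Matrix

/-- The multivariate Gaussian measure `N(m̄, C)` on `ℝⁿ` (with `C` symmetric positive definite),
defined as the pushforward of the standard Gaussian product measure under `x ↦ m̄ + C^{1/2} x`,
where `C^{1/2}` is the positive semidefinite square root of `C`. -/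
noncomputable def multivariateGaussian {n : ℕ} (mbar : Fin n → ℝ)
    (C : Matrix (Fin n) (Fin n) ℝ) (hC : C.PosDef) : Measure (Fin n → ℝ) :=
  Measure.map (fun x => mbar + (hC.posSemidef.isHermitian.eigenvectorUnitary.1 *
      diagonal (Real.sqrt ∘ hC.posSemidef.isHermitian.eigenvalues) *
      (star hC.posSemidef.isHermitian.eigenvectorUnitary : Matrix (Fin n) (Fin n) ℝ)).mulVec x)
    (Measure.pi fun _ : Fin n => gaussianReal 0 1)

/-!
Write `ν` as the image of the standard Gaussian under `y ↦ √C y`; this turns `⟨x, A x⟩` into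
`⟨y, B y⟩` with `B = √C A √C`, and `tr B = tr (A C)`, `tr B² = tr ((A C)²)`. The standard
Gaussian is invariant under orthogonal changes of coordinates, so in an orthonormal eigenbasis of
`B` the quadratic form becomes `∑ λᵢ yᵢ²` with independent standard Gaussian `yᵢ`. Its variance is
`∑ λᵢ² Var[y²] = 2 ∑ λᵢ² = 2 tr B²`, where `E[y⁴] = 3` is read off the fourth derivative at `0`
of the moment generating function `exp (t² / 2)`.
-/

open Module Real Polynomial
open scoped NNReal RealInnerProductSpace MatrixOrder

noncomputable def gaussianMomentPoly (v : ℝ) : ℕ → ℝ[X]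
  | 0 => 1
  | k + 1 => derivative (gaussianMomentPoly v k) + C v * X * gaussianMomentPoly v k

lemma deriv_eval_mul_exp_mul_sq_div_two (v : ℝ) (q : ℝ[X]) :
    deriv (fun t ↦ q.eval t * exp (v * t ^ 2 / 2)) =
      fun t ↦ (derivative q + C v * X * q).eval t * exp (v * t ^ 2 / 2) := by
  ext t
  have hexp : HasDerivAt (fun t ↦ exp (v * t ^ 2 / 2)) (exp (v * t ^ 2 / 2) * (v * t)) t := by
    convert ((hasDerivAt_pow 2 t).const_mul v |>.div_const 2).exp using 1
    ring
  rw [((q.hasDerivAt t).fun_mul hexp).deriv]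
  simp only [eval_add, eval_mul, eval_C, eval_X]
  ring

lemma iteratedDeriv_exp_mul_sq_div_two (v : ℝ) (k : ℕ) :
    iteratedDeriv k (fun t ↦ exp (v * t ^ 2 / 2)) =
      fun t ↦ (gaussianMomentPoly v k).eval t * exp (v * t ^ 2 / 2) := by
  induction k with
  | zero => simp [gaussianMomentPoly]
  | succ k ih =>
    rw [iteratedDeriv_succ, ih, deriv_eval_mul_exp_mul_sq_div_two, gaussianMomentPoly]

lemma integral_pow_gaussianReal_zero (v : ℝ≥0) (k : ℕ) :
    ∫ x, x ^ k ∂gaussianReal 0 v = (gaussianMomentPoly v k).eval 0 := by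
  have h := iteratedDeriv_mgf_zero (X := id) (μ := gaussianReal 0 v) (by simp) k
  rw [mgf_id_gaussianReal] at h
  simp only [zero_mul, zero_add, iteratedDeriv_exp_mul_sq_div_two] at h
  simpa using h.symm

lemma integral_sq_gaussianReal_zero (v : ℝ≥0) : ∫ x, x ^ 2 ∂gaussianReal 0 v = v := by
  simp [integral_pow_gaussianReal_zero, gaussianMomentPoly]

lemma integral_pow_four_gaussianReal_zero (v : ℝ≥0) :
    ∫ x, x ^ 4 ∂gaussianReal 0 v = 3 * v ^ 2 := by
  simp only [integral_pow_gaussianReal_zero, gaussianMomentPoly, derivative_one, derivative_mul,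
    derivative_C, derivative_X, derivative_add, eval_add, eval_mul, eval_C, eval_X, eval_one,
    eval_zero, derivative_zero]
  ring

lemma integrable_pow_gaussianReal (μ : ℝ) (v : ℝ≥0) (k : ℕ) :
    Integrable (fun x ↦ x ^ k) (gaussianReal μ v) :=
  integrable_pow_of_mem_interior_integrableExpSet (X := id) (by simp) k

lemma variance_sq_gaussianReal_zero (v : ℝ≥0) :
    Var[fun x ↦ x ^ 2; gaussianReal 0 v] = 2 * v ^ 2 := by
  have hexpand (x : ℝ) : (x ^ 2 - v) ^ 2 = x ^ 4 - 2 * v * x ^ 2 + v ^ 2 := by ring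
  have h2 := (integrable_pow_gaussianReal 0 v 2).const_mul (2 * v)
  have h4 := integrable_pow_gaussianReal 0 v 4
  rw [variance_eq_integral (by fun_prop), integral_sq_gaussianReal_zero]
  simp_rw [hexpand]
  rw [integral_add (f := fun x ↦ x ^ 4 - 2 * (v : ℝ) * x ^ 2) (h4.sub h2) (integrable_const _),
    integral_sub h4 h2, integral_const_mul, integral_pow_four_gaussianReal_zero,
    integral_sq_gaussianReal_zero, integral_const, probReal_univ, one_smul]
  ring

lemma integral_sq_sum_mul_sq_sub_pi_gaussianReal {ι : Type*} [Fintype ι] (v : ℝ≥0)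
    (d : ι → ℝ) :
    ∫ y, (∑ i, d i * y i ^ 2 - v * ∑ i, d i) ^ 2 ∂Measure.pi (fun _ : ι ↦ gaussianReal 0 v) =
      2 * v ^ 2 * ∑ i, d i ^ 2 := by
  have hmean :
      ∫ y, ∑ i, d i * y i ^ 2 ∂(Measure.pi fun _ : ι ↦ gaussianReal 0 v) = v * ∑ i, d i := by
    rw [integral_finsetSum _ fun i _ ↦ ?_]
    · simp_rw [integral_const_mul, integral_comp_eval (X := fun _ : ι ↦ ℝ)
        (f := fun x : ℝ ↦ x ^ 2) (by fun_prop), integral_sq_gaussianReal_zero, Finset.mul_sum,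
        mul_comm]
    · exact (integrable_comp_eval (X := fun _ : ι ↦ ℝ) (f := fun x : ℝ ↦ x ^ 2)
        (integrable_pow_gaussianReal 0 v 2)).const_mul _
  have hvar : Var[fun y ↦ ∑ i, d i * y i ^ 2; Measure.pi fun _ : ι ↦ gaussianReal 0 v] =
      2 * v ^ 2 * ∑ i, d i ^ 2 := by
    have hL2 (i : ι) : MemLp (fun x : ℝ ↦ d i * x ^ 2) 2 (gaussianReal 0 v) := by
      refine ((memLp_two_iff_integrable_sq (by fun_prop)).2 ?_).const_mul (d i)
      simpa [← pow_mul] using integrable_pow_gaussianReal 0 v 4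
    have hsum := variance_sum_pi hL2
    simp only [Finset.sum_fn] at hsum
    rw [hsum, Finset.mul_sum]
    simp_rw [variance_const_mul, variance_sq_gaussianReal_zero]
    exact Finset.sum_congr rfl fun i _ ↦ by ring
  rw [← hmean, ← variance_eq_integral
    (Finset.measurable_sum _ fun i _ ↦ by fun_prop).aemeasurable, hvar]

namespace LinearMap.IsSymmetric

variable {E : Type*} [NormedAddCommGroup E] [InnerProductSpace ℝ E] [FiniteDimensional ℝ E]
  {T : E →ₗ[ℝ] E} {n : ℕ}

lemma inner_apply_self_eq_sum (hT : T.IsSymmetric) (hn : finrank ℝ E = n) (x : E) :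
    ⟪x, T x⟫ = ∑ i, hT.eigenvalues hn i * (hT.eigenvectorBasis hn).repr x i ^ 2 := by
  rw [← (hT.eigenvectorBasis hn).repr.inner_map_map, PiLp.inner_apply]
  simp_rw [hT.eigenvectorBasis_apply_self_apply]
  simp [sq, mul_assoc]

lemma trace_mul_self_eq_sum (hT : T.IsSymmetric) (hn : finrank ℝ E = n) :
    LinearMap.trace ℝ E (T * T) = ∑ i, hT.eigenvalues hn i ^ 2 := by
  rw [trace_eq_sum_inner _ (hT.eigenvectorBasis hn)]
  simp [Module.End.mul_apply, inner_smul_right, sq]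

end LinearMap.IsSymmetric

lemma integral_sq_inner_apply_self_sub_trace_stdGaussian {E : Type*} [NormedAddCommGroup E]
    [InnerProductSpace ℝ E] [FiniteDimensional ℝ E] [MeasurableSpace E] [BorelSpace E]
    {T : E →ₗ[ℝ] E} (hT : T.IsSymmetric) :
    ∫ x, (⟪x, T x⟫ - LinearMap.trace ℝ E T) ^ 2 ∂stdGaussian E =
      2 * LinearMap.trace ℝ E (T * T) := by
  have hT_cont : Continuous T := T.continuous_of_finiteDimensional
  rw [stdGaussian_eq_map_pi_orthonormalBasis (hT.eigenvectorBasis rfl),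
    integral_map (Measurable.aemeasurable (by fun_prop)) (by fun_prop)]
  simp_rw [hT.inner_apply_self_eq_sum rfl, hT.trace_eq_sum_eigenvalues rfl,
    hT.trace_mul_self_eq_sum rfl, OrthonormalBasis.sum_repr_symm]
  simpa using integral_sq_sum_mul_sq_sub_pi_gaussianReal 1 (hT.eigenvalues rfl)

lemma integral_pi_gaussianReal_eq_stdGaussian {ι F : Type*} [Fintype ι] [NormedAddCommGroup F]
    [NormedSpace ℝ F] (f : (ι → ℝ) → F) :
    ∫ y, f y ∂(Measure.pi fun _ : ι ↦ gaussianReal 0 1) =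
      ∫ z, f (WithLp.ofLp z) ∂stdGaussian (EuclideanSpace ℝ ι) := by
  rw [← map_pi_eq_stdGaussian]
  exact (integral_map_equiv (MeasurableEquiv.toLp 2 (ι → ℝ)) fun z ↦ f (WithLp.ofLp z)).symm

namespace Matrix

lemma IsSymm.integral_sq_dotProduct_mulVec_sub_trace {ι : Type*} [Fintype ι] [DecidableEq ι]
    {B : Matrix ι ι ℝ} (hB : B.IsSymm) :
    ∫ y, (y ⬝ᵥ B *ᵥ y - B.trace) ^ 2 ∂(Measure.pi fun _ : ι ↦ gaussianReal 0 1) =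
      2 * (B * B).trace := by
  have hT : (toEuclideanLin B).IsSymmetric :=
    isSymmetric_toEuclideanLin_iff.2 (by rwa [IsHermitian, conjTranspose_eq_transpose_of_trivial])
  have htrace (M : Matrix ι ι ℝ) : LinearMap.trace ℝ _ (toEuclideanLin M) = M.trace := by
    rw [toEuclideanLin_eq_toLin_orthonormal, trace_toLin_eq]
  have hinner (z : EuclideanSpace ℝ ι) : ⟪z, toEuclideanLin B z⟫ = z.ofLp ⬝ᵥ B *ᵥ z.ofLp := by
    simp [EuclideanSpace.inner_eq_star_dotProduct, dotProduct_comm]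
  rw [integral_pi_gaussianReal_eq_stdGaussian, ← htrace, ← htrace, toLpLin_mul_same]
  simp_rw [← hinner]
  exact integral_sq_inner_apply_self_sub_trace_stdGaussian hT

lemma IsSymm.dotProduct_mulVec_conj {ι : Type*} [Fintype ι] {S : Matrix ι ι ℝ} (hS : S.IsSymm)
    (A : Matrix ι ι ℝ) (y : ι → ℝ) :
    S *ᵥ y ⬝ᵥ A *ᵥ (S *ᵥ y) = y ⬝ᵥ (S * A * S) *ᵥ y := by
  rw [← mulVec_mulVec, ← mulVec_mulVec, dotProduct_mulVec y S, ← mulVec_transpose, hS.eq]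

lemma PosSemidef.eigenvectorUnitary_mul_diagonal_sqrt_mul_star {ι : Type*} [Fintype ι]
    [DecidableEq ι] {C : Matrix ι ι ℝ} (hC : C.PosSemidef) :
    hC.isHermitian.eigenvectorUnitary.1 * diagonal (Real.sqrt ∘ hC.isHermitian.eigenvalues) *
      (star hC.isHermitian.eigenvectorUnitary : Matrix ι ι ℝ) = CFC.sqrt C := by
  rw [CFC.sqrt_eq_real_sqrt C hC.nonneg, cfcₙ_eq_cfc, hC.isHermitian.cfc_eq, IsHermitian.cfc,
    Unitary.conjStarAlgAut_apply]
  rfl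

end Matrix

lemma multivariateGaussian_eq_map {n : ℕ} (mbar : Fin n → ℝ) {C : Matrix (Fin n) (Fin n) ℝ}
    (hC : C.PosDef) :
    _root_.multivariateGaussian mbar C hC =
      (Measure.pi fun _ : Fin n ↦ gaussianReal 0 1).map (mbar + CFC.sqrt C *ᵥ ·) := by
  simp [_root_.multivariateGaussian,
    hC.posSemidef.eigenvectorUnitary_mul_diagonal_sqrt_mul_star]

/-- The variance of the Gaussian quadratic form: for `ν = N(0, C)` and `A` symmetric,
`∫ (⟨x, A x⟩ - tr(A C))² dν = 2 tr((A C)²)`. -/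
theorem var_quadratic_form {n : ℕ}
    (C : Matrix (Fin n) (Fin n) ℝ) (hC : C.PosDef)
    (A : Matrix (Fin n) (Fin n) ℝ) (hA : A.IsSymm) :
    ∫ x, (x ⬝ᵥ A.mulVec x - (A * C).trace) ^ 2 ∂(multivariateGaussian 0 C hC)
      = 2 * ((A * C) ^ 2).trace := by
  rw [multivariateGaussian_eq_map, integral_map (by fun_prop) (by fun_prop)]
  simp only [zero_add]
  set S := CFC.sqrt C
  have hS : S.IsSymm := by
    rw [IsSymm, ← conjTranspose_eq_transpose_of_trivial]
    exact (CFC.sqrt_nonneg C).isSelfAdjoint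
  have hSS : S * S = C := CFC.sqrt_mul_sqrt_self C hC.posSemidef.nonneg
  have hB : (S * A * S).IsSymm := by
    rw [IsSymm, transpose_mul, transpose_mul, hS.eq, hA.eq, Matrix.mul_assoc]
  have htrace : (S * A * S).trace = (A * C).trace := by
    rw [trace_mul_comm, ← Matrix.mul_assoc, hSS, trace_mul_comm]
  have htrace_sq : (S * A * S * (S * A * S)).trace = ((A * C) ^ 2).trace := by
    rw [sq, ← hSS]
    simp only [Matrix.mul_assoc]
    rw [trace_mul_comm S]
    simp only [Matrix.mul_assoc]
  simp_rw [hS.dotProduct_mulVec_conj, ← htrace]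
  rw [hB.integral_sq_dotProduct_mulVec_sub_trace, htrace_sq]
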